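/- Let F be a diagram of simplicial sets indexed by a small category I such that F(i) is non-singular for every object i of I. Then the limit of F computed in the category SSet is a non-singular simplicial set. -/

import Mathlib

/-!
A non-degenerate simplex of a non-singular simplicial set has pairwise distinct vertices, and a
simplex with pairwise distinct vertices represents a monomorphism `Δ[n] ⟶ X`. Suppose the vertices
`a < b` of a non-degenerate simplex `x` of the limit agree. In each non-singular `F i`, the
projection of `x` is `f^* y` with `f` epi and `y` non-degenerate, so `f a = f b`, hence
`f a = f (a + 1)` and the projection lies in the image of the degeneracy `s_a`. Lying in that image
is the equation `s_a d_a x = x`, which the jointly injective projections detect, so `x` is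
degenerate.
-/

open CategoryTheory CategoryTheory.Limits Simplicial SSet

/-- The `i`-th vertex of an `n`-simplex `x`, i.e. `x · εᵢ`, where `εᵢ : [0] ⟶ [n]`
sends `0` to `i`. -/
def SSet.vertex (X : SSet) {n : ℕ} (x : X _⦋n⦌) (i : Fin (n + 1)) : X _⦋0⦌ :=
  X.map (SimplexCategory.const ⦋0⦌ ⦋n⦌ i).op x

/-- A simplex is degenerate if it is obtained from a simplex of strictly lower degree
by the action of a (necessarily non-identity) epimorphism of the simplex category. -/
def SSet.IsDegenerate (X : SSet) {n : ℕ} (x : X _⦋n⦌) : Prop :=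
  ∃ (m : ℕ) (_ : m < n) (σ : (⦋n⦌ : SimplexCategory) ⟶ ⦋m⦌) (y : X _⦋m⦌),
    Epi σ ∧ x = X.map σ.op y

/-- A simplicial set is non-singular if the representing map of each of its
non-degenerate simplices is a monomorphism. -/
def SSet.NonSingular (X : SSet) : Prop :=
  ∀ (n : ℕ) (x : X _⦋n⦌), ¬ X.IsDegenerate x → Mono ((SSet.yonedaEquiv (X := X) (n := ⦋n⦌)).symm x)

/-- The relation `≈ₓ` on `Fin (n + 1)`: `i ≈ₓ k` iff there exists `j` with
`i ≤ k`, `k ≤ j` and `x·εᵢ = x·εⱼ`. -/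
def SSet.approxRel (X : SSet) {n : ℕ} (x : X _⦋n⦌) (i k : Fin (n + 1)) : Prop :=
  ∃ j, i ≤ k ∧ k ≤ j ∧ X.vertex x i = X.vertex x j

/-- The equivalence relation `Rₓ` generated by `≈ₓ`. -/
def SSet.vertexRel (X : SSet) {n : ℕ} (x : X _⦋n⦌) : Fin (n + 1) → Fin (n + 1) → Prop :=
  Relation.EqvGen (X.approxRel x)

namespace SSet

variable {X : SSet}

lemma isDegenerate_iff_mem_degenerate {n : ℕ} (x : X _⦋n⦌) :
    X.IsDegenerate x ↔ x ∈ X.degenerate n := by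
  rw [mem_degenerate_iff]
  constructor
  · rintro ⟨m, hm, σ, y, hσ, rfl⟩
    exact ⟨m, hm, σ, hσ, y, rfl⟩
  · rintro ⟨m, hm, σ, hσ, y, rfl⟩
    exact ⟨m, hm, σ, y, hσ, rfl⟩

lemma nonSingular_iff_nonsingular : X.NonSingular ↔ X.Nonsingular := by
  simp only [NonSingular, isDegenerate_iff_mem_degenerate,
    ← mem_nonDegenerate_iff_notMem_degenerate]
  exact ⟨fun h ↦ ⟨fun x ↦ h _ x.1 x.2⟩, fun _ n x hx ↦ Nonsingular.mono' x hx⟩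

lemma vertex_map {n m : ℕ} (f : ⦋n⦌ ⟶ ⦋m⦌) (x : X _⦋m⦌) (i : Fin (n + 1)) :
    X.vertex (X.map f.op x) i = X.vertex x (f.toOrderHom i) := by
  simp only [vertex, ← Functor.map_comp_apply, ← op_comp, SimplexCategory.const_comp]

lemma vertex_app {Y : SSet} (g : X ⟶ Y) {n : ℕ} (x : X _⦋n⦌) (i : Fin (n + 1)) :
    g.app _ (X.vertex x i) = Y.vertex (g.app _ x) i :=
  NatTrans.naturality_apply g _ x

lemma mono_yonedaEquiv_symm_of_injective_vertex {n : ℕ} (x : X _⦋n⦌)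
    (hx : Function.Injective (X.vertex x)) : Mono (yonedaEquiv.symm x) := by
  rw [NatTrans.mono_iff_mono_app]
  intro k
  rw [mono_iff_injective]
  intro α β h
  obtain ⟨f, rfl⟩ := stdSimplex.objEquiv.symm.surjective α
  obtain ⟨g, rfl⟩ := stdSimplex.objEquiv.symm.surjective β
  rw [yonedaEquiv_symm_app_objEquiv_symm, yonedaEquiv_symm_app_objEquiv_symm] at h
  congr 1
  ext t : 3
  apply hx
  rw [← vertex_map, ← vertex_map, h]

lemma mem_range_σ_iff {n : ℕ} {j : Fin (n + 1)} {x : X _⦋n + 1⦌} :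
    x ∈ Set.range (X.σ j) ↔ X.σ j (X.δ j.castSucc x) = x :=
  ⟨by rintro ⟨y, rfl⟩; rw [δ_comp_σ_self_apply], fun h ↦ ⟨_, h⟩⟩

lemma mem_range_σ_of_jointly_injective {ι : Type*} {Y : ι → SSet} (g : ∀ i, X ⟶ Y i) {n : ℕ}
    (hg : ∀ x y : X _⦋n + 1⦌, (∀ i, (g i).app _ x = (g i).app _ y) → x = y)
    {j : Fin (n + 1)} {x : X _⦋n + 1⦌} (hx : ∀ i, (g i).app _ x ∈ Set.range ((Y i).σ j)) :
    x ∈ Set.range (X.σ j) := by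
  refine mem_range_σ_iff.2 (hg _ _ fun i ↦ ?_)
  rw [σ_naturality_apply, δ_naturality_apply, mem_range_σ_iff.1 (hx i)]

lemma Nonsingular.vertex_injective [X.Nonsingular] {n : ℕ} {x : X _⦋n⦌}
    (hx : x ∈ X.nonDegenerate n) : Function.Injective (X.vertex x) := fun a b h ↦ by
  simpa using congr(($(Nonsingular.injective_map x hx h)).toOrderHom 0)

lemma Nonsingular.mem_range_σ_of_vertex_eq [X.Nonsingular] {n : ℕ} {x : X _⦋n + 1⦌}
    {j : Fin (n + 1)} {b : Fin (n + 2)} (hb : j.castSucc < b)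
    (h : X.vertex x j.castSucc = X.vertex x b) : x ∈ Set.range (X.σ j) := by
  obtain ⟨m, f, _, ⟨y, hy⟩, rfl⟩ := X.exists_nonDegenerate x
  rw [vertex_map, vertex_map] at h
  have hfb := Nonsingular.vertex_injective hy h
  have hf : f.toOrderHom j.castSucc = f.toOrderHom j.succ :=
    le_antisymm (f.toOrderHom.monotone Fin.castSucc_lt_succ.le)
      (hfb ▸ f.toOrderHom.monotone (Fin.castSucc_lt_iff_succ_le.mp hb))
  obtain ⟨g, rfl⟩ := SimplexCategory.eq_σ_comp_of_not_injective' f j hf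
  exact ⟨X.map g.op y, by simp [SimplicialObject.σ]⟩

section JointlyInjective

variable {ι : Type*} {Y : ι → SSet} [∀ i, (Y i).Nonsingular] (g : ∀ i, X ⟶ Y i)

lemma vertex_injective_of_jointly_injective
    (hg : ∀ (k : SimplexCategoryᵒᵖ) (x y : X.obj k), (∀ i, (g i).app k x = (g i).app k y) → x = y)
    {n : ℕ} {x : X _⦋n⦌} (hx : x ∈ X.nonDegenerate n) :
    Function.Injective (X.vertex x) := by
  refine .of_lt_imp_ne fun a b hab h ↦ ?_
  obtain _ | n := n
  · exact hab.ne (Subsingleton.elim (α := Fin 1) a b)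
  have hσ : x ∈ Set.range (X.σ (a.castPred (Fin.ne_last_of_lt hab))) :=
    mem_range_σ_of_jointly_injective g (hg _) fun i ↦
      Nonsingular.mem_range_σ_of_vertex_eq (b := b) (by simpa using hab)
        (by rw [Fin.castSucc_castPred, ← vertex_app, ← vertex_app, h])
  obtain ⟨y, rfl⟩ := hσ
  exact hx (X.σ_mem_degenerate _ y)

theorem Nonsingular.of_jointly_injective
    (hg : ∀ (k : SimplexCategoryᵒᵖ) (x y : X.obj k), (∀ i, (g i).app k x = (g i).app k y) → x = y) :
    X.Nonsingular where
  mono x := mono_yonedaEquiv_symm_of_injective_vertex _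
    (vertex_injective_of_jointly_injective g hg x.2)

end JointlyInjective

theorem Nonsingular.of_isLimit {J : Type*} [Category J] {F : J ⥤ SSet} [∀ j, (F.obj j).Nonsingular]
    {c : Cone F} (hc : IsLimit c) : c.pt.Nonsingular :=
  .of_jointly_injective c.π.app fun k ↦
    Concrete.isLimit_ext _ (isLimitOfPreserves ((evaluation _ _).obj k) hc)

end SSet

/-- A limit in `SSet` of a diagram of non-singular simplicial sets is non-singular. -/
theorem nonsingular_limit {I : Type} [SmallCategory I] (F : I ⥤ SSet.{0})
    (h : ∀ i, (F.obj i).NonSingular) : SSet.NonSingular (limit F) := by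
  simp only [SSet.nonSingular_iff_nonsingular] at h ⊢
  exact .of_isLimit (limit.isLimit F)
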